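/- (T^{≥1}(ℝ^d), ≻) is the free Zinbiel algebra over ℝ^d: for any real vector space Z equipped with a bilinear map ≻' : Z × Z → Z satisfying a ≻' (b ≻' c) = (a ≻' b + b ≻' a) ≻' c for all a, b, c ∈ Z, and any linear map B : ℝ^d → Z, there exists a unique linear map Λ_B : T^{≥1}(ℝ^d) → Z such that Λ_B(i) = B(e_i) for every letter i (where e_i is the i-th standard basis vector) and Λ_B(x ≻ y) = Λ_B(x) ≻' Λ_B(y) for all x, y ∈ T^{≥1}(ℝ^d). -/

import Mathlib

/-! The lift sends a nonempty word `i₁⋯iₙ` to the left-nested product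
`(⋯(b i₁ ≻' b i₂) ≻' ⋯) ≻' b iₙ` of the generators `b i = B eᵢ`, so that `Λ(w∘i) = Λ(w) ≻' b i`.
It respects `≻` by induction on the total length: the last-letter recursion of the shuffle gives
`u ≻ (v∘i) = (u ≻ v + v ≻ u)∘i`, and the Zinbiel identity
`Λu ≻' (Λv ≻' b i) = (Λu ≻' Λv + Λv ≻' Λu) ≻' b i` is exactly what is needed to pass `Λ` through.
Uniqueness holds because `w∘i = w ≻ i`, so every nonempty word is an iterated half-shuffle
of letters. -/

noncomputable section

open MeasureTheory

/-- Words in the alphabet `{1,…,d}`. -/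
abbrev Word (d : ℕ) := List (Fin d)

/-- `T(ℝ^d)`: the real vector space with basis the words in `{1,…,d}`. -/
abbrev Tens (d : ℕ) := Word d →₀ ℝ

namespace SigPaper

variable {d m s : ℕ}

/-- The basis word `w` as an element of `T(ℝ^d)`. -/
def wordT (w : Word d) : Tens d := Finsupp.single w 1

/-- The shuffle product of two words. -/
def shuffleWord : Word d → Word d → Tens d
  | [], v => Finsupp.single v 1
  | u, [] => Finsupp.single u 1
  | a :: u, b :: v =>
      Finsupp.mapDomain (fun w => a :: w) (shuffleWord u (b :: v)) +
      Finsupp.mapDomain (fun w => b :: w) (shuffleWord (a :: u) v)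
  termination_by u v => u.length + v.length
  decreasing_by all_goals simp +arith

/-- The shuffle product `⧢` on `T(ℝ^d)`, the bilinear extension of the shuffle of words. -/
def shuffle (x y : Tens d) : Tens d :=
  x.sum fun u a => y.sum fun v b => (a * b) • shuffleWord u v

/-- The operator appending the letter `i` at the end of every word (`T_i^+`). -/
def appendLetter (i : Fin d) (x : Tens d) : Tens d :=
  Finsupp.mapDomain (fun w => w ++ [i]) x

/-- The right half-shuffle of two words: `w ≻ (v∘i) = (w ⧢ v)∘i` (zero if the right word
is empty). -/
def halfShuffleWord (u v : Word d) : Tens d :=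
  match v.getLast? with
  | none => 0
  | some i => appendLetter i (shuffleWord u v.dropLast)

/-- The right half-shuffle `≻`, extended bilinearly. -/
def halfShuffle (x y : Tens d) : Tens d :=
  x.sum fun u a => y.sum fun v b => (a * b) • halfShuffleWord u v

/-- The letter-appending operator `T_i^+`. -/
def Tplus (i : Fin d) : Tens d → Tens d := appendLetter i

/-- `T_i^-` on a word: removes the last letter if it equals `i`, otherwise `0`. -/
def TminusWord (i : Fin d) (w : Word d) : Tens d :=
  match w.getLast? with
  | none => 0
  | some j => if j = i then Finsupp.single w.dropLast 1 else 0

/-- The letter-removing operator `T_i^-`. -/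
def Tminus (i : Fin d) (x : Tens d) : Tens d := x.sum fun w a => a • TminusWord i w

/-- The single-letter word `i` in `T(ℝ^d)`. -/
def letterT (i : Fin d) : Tens d := Finsupp.single [i] 1

/-- Shuffle powers `x^{⧢ n}`. -/
def shufflePow (x : Tens d) : ℕ → Tens d
  | 0 => Finsupp.single [] 1
  | n + 1 => shuffle (shufflePow x n) x

/-- Shuffle product of a list of elements. -/
def shuffleList : List (Tens d) → Tens d
  | [] => Finsupp.single [] 1
  | x :: xs => shuffle x (shuffleList xs)

/-- Image of the monomial `x^t` under `φ_d`: the shuffle product of its letters. -/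
def phiMon (t : Fin d →₀ ℕ) : Tens d :=
  shuffleList ((List.finRange d).map fun i => shufflePow (letterT i) (t i))

/-- The embedding `φ_d : ℝ[x₁,…,x_d] → (T(ℝ^d), ⧢)` sending the monomial
`x_{i₁}⋯x_{i_l}` to `i₁ ⧢ ⋯ ⧢ i_l`. -/
def phi (f : MvPolynomial (Fin d) ℝ) : Tens d :=
  f.support.sum fun t => f.coeff t • phiMon t

/-- A polynomial map `p : ℝ^d → ℝ^m`, given by `m` polynomials in `d` variables. -/
abbrev PolyMap (d m : ℕ) := Fin m → MvPolynomial (Fin d) ℝ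

/-- `k_p^{ij} = φ_d(∂p_i/∂x_j) ∈ T(ℝ^d)`. -/
def kP (p : PolyMap d m) (i : Fin m) (j : Fin d) : Tens d :=
  phi (MvPolynomial.pderiv j (p i))

/-- Auxiliary: `M_p` on reversed words, so that `M_p(e) = e` and
`M_p(w∘i) = Σ_j (M_p(w) ⧢ k_p^{ij})∘j`. -/
def MpRev (p : PolyMap d m) : List (Fin m) → Tens d
  | [] => Finsupp.single [] 1
  | i :: w => ∑ j : Fin d, appendLetter j (shuffle (MpRev p w) (kP p i j))

/-- `M_p` on a word. -/
def MpWord (p : PolyMap d m) (w : Word m) : Tens d := MpRev p w.reverse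

/-- The linear map `M_p : T(ℝ^m) → T(ℝ^d)`. -/
def Mp (p : PolyMap d m) (x : Tens m) : Tens d := x.sum fun w a => a • MpWord p w

/-- `X : [0,L] → ℝ^d` is piecewise continuously differentiable: there is a partition
`0 = t₀ ≤ t₁ ≤ ⋯ ≤ t_n = L` such that `X` is `C¹` on each subinterval. -/
def PiecewiseC1 (X : ℝ → Fin d → ℝ) (L : ℝ) : Prop :=
  ∃ (n : ℕ) (t : Fin (n + 1) → ℝ), Monotone t ∧ t 0 = 0 ∧ t (Fin.last n) = L ∧
    ∀ k : Fin n, ContDiffOn ℝ 1 X (Set.Icc (t k.castSucc) (t k.succ))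

/-- Iterated-integral signature coefficients, on reversed words:
`⟨σ(X|_{[0,t]}), w∘i⟩ = ∫_0^t ⟨σ(X|_{[0,r]}), w⟩ Ẋ^i_r dr`. -/
def sigRev (X : ℝ → Fin d → ℝ) : List (Fin d) → ℝ → ℝ
  | [], _ => 1
  | i :: w, t => ∫ r in (0:ℝ)..t, sigRev X w r * deriv (fun u => X u i) r

/-- `⟨σ(X|_{[0,L]}), w⟩`, the signature coefficient of the word `w`. -/
def sigWord (X : ℝ → Fin d → ℝ) (L : ℝ) (w : Word d) : ℝ := sigRev X w.reverse L

/-- The pairing `⟨σ(X|_{[0,L]}), x⟩` for `x ∈ T(ℝ^d)`. -/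
def sigT (X : ℝ → Fin d → ℝ) (L : ℝ) (x : Tens d) : ℝ :=
  x.sum fun w a => a * sigWord X L w

/-- The transformed path `p(X) : t ↦ p(X(t))`. -/
def pPath (p : PolyMap d m) (X : ℝ → Fin d → ℝ) : ℝ → Fin m → ℝ :=
  fun t i => MvPolynomial.eval (X t) (p i)

/-- The translated polynomial map `p̃(y) = p(y + x₀) − p(x₀)`, satisfying `p̃(0) = 0`. -/
def ptilde (p : PolyMap d m) (x0 : Fin d → ℝ) : PolyMap d m := fun i =>
  MvPolynomial.aeval (fun j => MvPolynomial.X j + MvPolynomial.C (x0 j)) (p i) -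
    MvPolynomial.C (MvPolynomial.eval x0 (p i))

/-- The pairing `⟨exp_∘(L·𝟙), x⟩` for `x ∈ T(ℝ¹)`: the coefficient of the word of
length `n` in `exp_∘(L·𝟙)` is `Lⁿ/n!`. -/
def expPair (L : ℝ) (x : Tens 1) : ℝ :=
  x.sum fun w a => a * (L ^ w.length / (w.length.factorial : ℝ))

/-- The pairing `⟨σ(X) ∘ σ(Y), x⟩` of the concatenation product of two signatures with
`x ∈ T(ℝ^d)`: on a word `w` it is `Σ_{u∘v = w} ⟨σ(X), u⟩·⟨σ(Y), v⟩`. -/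
def concatPair (X Y : ℝ → Fin d → ℝ) (L : ℝ) (x : Tens d) : ℝ :=
  x.sum fun w a =>
    a * ∑ k ∈ Finset.range (w.length + 1), sigWord X L (w.take k) * sigWord Y L (w.drop k)

theorem shuffleWord_nil_left (v : Word d) : shuffleWord [] v = Finsupp.single v 1 := by
  cases v <;> rw [shuffleWord]

theorem shuffleWord_nil_right (u : Word d) : shuffleWord u [] = Finsupp.single u 1 := by
  cases u <;> simp [shuffleWord]

theorem shuffleWord_cons_cons (a b : Fin d) (u v : Word d) :
    shuffleWord (a :: u) (b :: v) =
      Finsupp.mapDomain (a :: ·) (shuffleWord u (b :: v)) +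
      Finsupp.mapDomain (b :: ·) (shuffleWord (a :: u) v) := by
  rw [shuffleWord]

theorem shuffleWord_comm : ∀ u v : Word d, shuffleWord u v = shuffleWord v u
  | [], v => by rw [shuffleWord_nil_left, shuffleWord_nil_right]
  | a :: u, [] => by rw [shuffleWord_nil_left, shuffleWord_nil_right]
  | a :: u, b :: v => by
      rw [shuffleWord_cons_cons, shuffleWord_cons_cons,
        shuffleWord_comm u (b :: v), shuffleWord_comm (a :: u) v, add_comm]
  termination_by u v => u.length + v.length

theorem appendLetter_single (i : Fin d) (w : Word d) (c : ℝ) :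
    appendLetter i (Finsupp.single w c) = Finsupp.single (w ++ [i]) c :=
  Finsupp.mapDomain_single

theorem appendLetter_add (i : Fin d) (x y : Tens d) :
    appendLetter i (x + y) = appendLetter i x + appendLetter i y :=
  Finsupp.mapDomain_add

theorem appendLetter_mapDomain_cons (i a : Fin d) (x : Tens d) :
    appendLetter i (Finsupp.mapDomain (a :: ·) x) =
      Finsupp.mapDomain (a :: ·) (appendLetter i x) := by
  simp only [appendLetter, ← Finsupp.mapDomain_comp]
  rfl

theorem appendLetter_apply_nil (i : Fin d) (x : Tens d) : appendLetter i x [] = 0 :=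
  Finsupp.mapDomain_of_notMem_range _ _ (by simp)

theorem shuffleWord_append_singleton : ∀ (u v : Word d) (j i : Fin d),
    shuffleWord (u ++ [j]) (v ++ [i]) =
      appendLetter i (shuffleWord (u ++ [j]) v) + appendLetter j (shuffleWord u (v ++ [i]))
  | [], [], j, i => by
      simp [shuffleWord_cons_cons, shuffleWord_nil_left, shuffleWord_nil_right, appendLetter_single]
  | a :: u, [], j, i => by
      have ih := shuffleWord_append_singleton u [] j i
      simp only [List.cons_append, List.nil_append] at ih ⊢
      simp only [shuffleWord_cons_cons, shuffleWord_nil_right, ih, Finsupp.mapDomain_add,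
        Finsupp.mapDomain_single, appendLetter_add, appendLetter_single,
        appendLetter_mapDomain_cons, List.cons_append]
      abel
  | [], b :: v, j, i => by
      have ih := shuffleWord_append_singleton [] v j i
      simp only [List.cons_append, List.nil_append] at ih ⊢
      simp only [shuffleWord_cons_cons, shuffleWord_nil_left, ih, Finsupp.mapDomain_add,
        Finsupp.mapDomain_single, appendLetter_add, appendLetter_single,
        appendLetter_mapDomain_cons, List.cons_append]
      abel
  | a :: u, b :: v, j, i => by
      have ih₁ := shuffleWord_append_singleton u (b :: v) j i
      have ih₂ := shuffleWord_append_singleton (a :: u) v j i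
      simp only [List.cons_append] at ih₁ ih₂ ⊢
      simp only [shuffleWord_cons_cons, ih₁, ih₂, Finsupp.mapDomain_add, appendLetter_add,
        appendLetter_mapDomain_cons]
      abel
  termination_by u v => u.length + v.length

theorem halfShuffleWord_append_singleton (u v : Word d) (i : Fin d) :
    halfShuffleWord u (v ++ [i]) = appendLetter i (shuffleWord u v) := by
  rw [halfShuffleWord, List.getLast?_concat, List.dropLast_concat]

theorem halfShuffleWord_apply_nil (u v : Word d) : halfShuffleWord u v [] = 0 := by
  rcases List.eq_nil_or_concat' v with rfl | ⟨v, i, rfl⟩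
  · rfl
  · rw [halfShuffleWord_append_singleton, appendLetter_apply_nil]

theorem shuffleWord_eq_halfShuffleWord_add {u v : Word d} (hu : u ≠ []) (hv : v ≠ []) :
    shuffleWord u v = halfShuffleWord u v + halfShuffleWord v u := by
  obtain ⟨u, j, rfl⟩ := (List.eq_nil_or_concat' u).resolve_left hu
  obtain ⟨v, i, rfl⟩ := (List.eq_nil_or_concat' v).resolve_left hv
  rw [halfShuffleWord_append_singleton, halfShuffleWord_append_singleton,
    shuffleWord_append_singleton, shuffleWord_comm u]

theorem halfShuffle_single_single (u v : Word d) (a b : ℝ) :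
    halfShuffle (Finsupp.single u a) (Finsupp.single v b) = (a * b) • halfShuffleWord u v := by
  simp [halfShuffle]

theorem halfShuffle_wordT_singleton (w : Word d) (i : Fin d) :
    halfShuffle (wordT w) (wordT [i]) = wordT (w ++ [i]) := by
  rw [wordT, wordT, halfShuffle_single_single, one_mul, one_smul, ← List.nil_append [i],
    halfShuffleWord_append_singleton, shuffleWord_nil_right, appendLetter_single]
  rfl

theorem wordT_apply_nil {w : Word d} (hw : w ≠ []) : wordT w [] = 0 :=
  Finsupp.single_eq_of_ne hw.symm

theorem eq_of_forall_single_ne_nil {M : Type*} [AddCommGroup M] [Module ℝ M]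
    {f g : Tens d →ₗ[ℝ] M} (h : ∀ w : Word d, w ≠ [] → f (wordT w) = g (wordT w))
    {x : Tens d} (hx : x [] = 0) : f x = g x := by
  refine LinearMap.eqOn_span (s := (Finsupp.single · 1) '' {w | w ≠ []}) ?_ ?_
  · rintro _ ⟨w, hw, rfl⟩
    exact h w hw
  · rw [← Finsupp.supported_eq_span_single, Finsupp.mem_supported']
    simpa using hx

theorem ne_nil_of_mem_support {x : Tens d} {w : Word d} (hw : w ∈ x.support) (hx : x [] = 0) :
    w ≠ [] := by
  rintro rfl
  exact Finsupp.mem_support_iff.mp hw hx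

section Zinbiel

variable {Z : Type*} [AddCommGroup Z] [Module ℝ Z] (zp : Z →ₗ[ℝ] Z →ₗ[ℝ] Z) (b : Fin d → Z)

def zinbielWord : Word d → Z
  | [] => 0
  | i :: w => w.foldl (fun z j => zp z (b j)) (b i)

theorem zinbielWord_append_singleton {w : Word d} (hw : w ≠ []) (i : Fin d) :
    zinbielWord zp b (w ++ [i]) = zp (zinbielWord zp b w) (b i) := by
  obtain ⟨j, w, rfl⟩ := List.exists_cons_of_ne_nil hw
  simp [zinbielWord]

def zinbielLift : Tens d →ₗ[ℝ] Z := Finsupp.linearCombination ℝ (zinbielWord zp b)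

theorem zinbielLift_single (w : Word d) (c : ℝ) :
    zinbielLift zp b (Finsupp.single w c) = c • zinbielWord zp b w :=
  Finsupp.linearCombination_single ℝ c w

theorem zinbielLift_appendLetter (i : Fin d) {x : Tens d} (hx : x [] = 0) :
    zinbielLift zp b (appendLetter i x) = zp (zinbielLift zp b x) (b i) := by
  refine eq_of_forall_single_ne_nil (f := zinbielLift zp b ∘ₗ Finsupp.lmapDomain ℝ ℝ (· ++ [i]))
    (g := zp.flip (b i) ∘ₗ zinbielLift zp b) (fun w hw => ?_) hx
  simp [wordT, zinbielLift_single, zinbielWord_append_singleton zp b hw]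

variable {zp}

theorem zinbielLift_halfShuffleWord (hzin : ∀ a b c : Z, zp a (zp b c) = zp (zp a b + zp b a) c)
    {u v : Word d} (hu : u ≠ []) (hv : v ≠ []) :
    zinbielLift zp b (halfShuffleWord u v) = zp (zinbielWord zp b u) (zinbielWord zp b v) := by
  obtain ⟨v, i, rfl⟩ := (List.eq_nil_or_concat' v).resolve_left hv
  rw [halfShuffleWord_append_singleton]
  rcases eq_or_ne v [] with rfl | hv
  · rw [shuffleWord_nil_right, appendLetter_single, zinbielLift_single, one_smul,
      zinbielWord_append_singleton zp b hu]
    rfl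
  · rw [zinbielLift_appendLetter zp b i (by simp [shuffleWord_eq_halfShuffleWord_add hu hv,
        halfShuffleWord_apply_nil]), shuffleWord_eq_halfShuffleWord_add hu hv, map_add,
      zinbielLift_halfShuffleWord hzin hu hv, zinbielLift_halfShuffleWord hzin hv hu,
      zinbielWord_append_singleton zp b hv, hzin]
termination_by u.length + v.length
decreasing_by all_goals subst_vars; simp +arith

theorem zinbielLift_halfShuffle (hzin : ∀ a b c : Z, zp a (zp b c) = zp (zp a b + zp b a) c)
    {x y : Tens d} (hx : x [] = 0) (hy : y [] = 0) :
    zinbielLift zp b (halfShuffle x y) = zp (zinbielLift zp b x) (zinbielLift zp b y) := by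
  calc zinbielLift zp b (halfShuffle x y)
      = x.sum fun u a => y.sum fun v c => (a * c) • zinbielLift zp b (halfShuffleWord u v) := by
        simp only [halfShuffle, map_finsuppSum, map_smul]
    _ = x.sum fun u a => y.sum fun v c => (a * c) • zp (zinbielWord zp b u) (zinbielWord zp b v) :=
        Finsupp.sum_congr fun u hu => Finsupp.sum_congr fun v hv => by
          rw [zinbielLift_halfShuffleWord b hzin (ne_nil_of_mem_support hu hx)
            (ne_nil_of_mem_support hv hy)]
    _ = zp (zinbielLift zp b x) (zinbielLift zp b y) := by
        rw [zinbielLift, Finsupp.linearCombination_apply, Finsupp.linearCombination_apply,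
          map_finsuppSum zp, LinearMap.finsupp_sum_apply]
        simp only [map_finsuppSum, map_smul, LinearMap.smul_apply, smul_smul, mul_comm]

end Zinbiel

theorem halfShuffle_hom_ext {Z : Type*} [AddCommGroup Z] [Module ℝ Z] (zp : Z →ₗ[ℝ] Z →ₗ[ℝ] Z)
    {Lam₁ Lam₂ : Tens d →ₗ[ℝ] Z} (h_letter : ∀ i, Lam₁ (wordT [i]) = Lam₂ (wordT [i]))
    (h₁ : ∀ x y : Tens d, x [] = 0 → y [] = 0 → Lam₁ (halfShuffle x y) = zp (Lam₁ x) (Lam₁ y))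
    (h₂ : ∀ x y : Tens d, x [] = 0 → y [] = 0 → Lam₂ (halfShuffle x y) = zp (Lam₂ x) (Lam₂ y))
    {x : Tens d} (hx : x [] = 0) : Lam₁ x = Lam₂ x := by
  refine eq_of_forall_single_ne_nil (fun w hw => ?_) hx
  induction w using List.reverseRecOn with
  | nil => contradiction
  | append_singleton w i ih =>
    rcases eq_or_ne w [] with rfl | hw
    · exact h_letter i
    · have hw₀ := wordT_apply_nil hw
      have hi₀ := wordT_apply_nil (List.cons_ne_nil i [])
      rw [← halfShuffle_wordT_singleton, h₁ _ _ hw₀ hi₀, h₂ _ _ hw₀ hi₀, ih hw, h_letter]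

/-- `(T^{≥1}(ℝ^d), ≻)` is the free Zinbiel algebra over `ℝ^d`: for every
Zinbiel algebra `(Z, ≻')` and every linear map `B : ℝ^d → Z` there is a unique linear map
`Λ_B : T^{≥1}(ℝ^d) → Z` with `Λ_B(i) = B(e_i)` for all letters `i` and
`Λ_B(x ≻ y) = Λ_B(x) ≻' Λ_B(y)`. (Maps on `T^{≥1}(ℝ^d)` are represented by linear maps
on `T(ℝ^d)`, with the conditions imposed on elements with vanishing empty-word
coefficient, i.e. on `T^{≥1}(ℝ^d)`; uniqueness is asserted on `T^{≥1}(ℝ^d)`.) -/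
theorem free_zinbiel (d : ℕ) (Z : Type*) [AddCommGroup Z] [Module ℝ Z]
    (zp : Z →ₗ[ℝ] Z →ₗ[ℝ] Z)
    (hzin : ∀ a b c : Z, zp a (zp b c) = zp (zp a b + zp b a) c)
    (B : (Fin d → ℝ) →ₗ[ℝ] Z) :
    (∃ Lam : Tens d →ₗ[ℝ] Z,
        (∀ i : Fin d, Lam (wordT [i]) = B (Pi.single i 1)) ∧
        (∀ x y : Tens d, x ([] : Word d) = 0 → y ([] : Word d) = 0 →
          Lam (halfShuffle x y) = zp (Lam x) (Lam y))) ∧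
    (∀ Lam₁ Lam₂ : Tens d →ₗ[ℝ] Z,
        ((∀ i : Fin d, Lam₁ (wordT [i]) = B (Pi.single i 1)) ∧
          (∀ x y : Tens d, x ([] : Word d) = 0 → y ([] : Word d) = 0 →
            Lam₁ (halfShuffle x y) = zp (Lam₁ x) (Lam₁ y))) →
        ((∀ i : Fin d, Lam₂ (wordT [i]) = B (Pi.single i 1)) ∧
          (∀ x y : Tens d, x ([] : Word d) = 0 → y ([] : Word d) = 0 →
            Lam₂ (halfShuffle x y) = zp (Lam₂ x) (Lam₂ y))) →
        ∀ x : Tens d, x ([] : Word d) = 0 → Lam₁ x = Lam₂ x) := by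
  let b : Fin d → Z := fun i => B (Pi.single i 1)
  refine ⟨⟨zinbielLift zp b, fun i => ?_, fun x y hx hy => zinbielLift_halfShuffle b hzin hx hy⟩,
    ?_⟩
  · rw [wordT, zinbielLift_single, one_smul]
    rfl
  · rintro Lam₁ Lam₂ ⟨hB₁, hm₁⟩ ⟨hB₂, hm₂⟩ x hx
    exact halfShuffle_hom_ext zp (fun i => (hB₁ i).trans (hB₂ i).symm) hm₁ hm₂ hx

end SigPaper
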